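/- Under the hypotheses of the perturbed KKT analysis, if ζ solves ℓ_{θθ} ζ = E_θᵀ, μ = −c_x⁻¹ c_θ ζ (tangent linear model), and ν = −c_x⁻ᵀ((J_{xx} − λᵀ·c_{xx})ᵀ μ + (J_{θx} − λᵀ·c_{θx})ᵀ ζ) (second order adjoint), then the first-order error in the quantity of interest satisfies E_θ · Δθ = ζᵀ ΔO + μᵀ ΔA − νᵀ ΔF. -/
import Mathlib


open Matrix

private lemma aux_reorient {a b : ℕ} (A : Matrix (Fin a) (Fin b) ℝ) (x : Fin a → ℝ) (y : Fin b → ℝ) :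
    x ᵥ* A ⬝ᵥ y = x ⬝ᵥ y ᵥ* Aᵀ := by
  rw [← Matrix.dotProduct_mulVec, ← Matrix.vecMul_transpose]

/-- a posteriori error estimate via super-Lagrange multipliers:
`E_θ · Δθ = ζᵀ ΔO + μᵀ ΔA − νᵀ ΔF`. -/
theorem a_posteriori_error_estimate {n m : ℕ}
    (Cx Jxx Lxx : Matrix (Fin n) (Fin n) ℝ)
    (Cθ Jxθ Lxθ : Matrix (Fin n) (Fin m) ℝ)
    (Jθx Lθx : Matrix (Fin m) (Fin n) ℝ)
    (Jθθ Lθθ : Matrix (Fin m) (Fin m) ℝ)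
    (ℓθθ : Matrix (Fin m) (Fin m) ℝ)
    (ΔF ΔA mu nu : Fin n → ℝ)
    (ΔO Eθ ζ Δθ : Fin m → ℝ)
    (hCx : IsUnit Cx)
    (hl : ℓθθ = (Jθθ - Lθθ)
      - (Jθx - Lθx) * Cx⁻¹ * Cθ
      - Cθᵀ * (Cx⁻¹)ᵀ * (Jxθ - Lxθ)
      + Cθᵀ * (Cx⁻¹)ᵀ * (Jxx - Lxx) * Cx⁻¹ * Cθ)
    (hsymm : ℓθθ.IsSymm) (hpd : ℓθθ.PosDef)
    -- the reduced-Hessian equation satisfied by the parameter change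
    (hΔθ : ℓθθ *ᵥ Δθ
      = ΔO - (Cθᵀ * (Cx⁻¹)ᵀ) *ᵥ ΔA
        - ((Cθᵀ * (Cx⁻¹)ᵀ * (Jxx - Lxx) - (Jθx - Lθx)) * Cx⁻¹) *ᵥ ΔF)
    -- Hessian equation, tangent linear model, and second order adjoint
    (hζ : ℓθθ *ᵥ ζ = Eθ)
    (hμ : mu = -((Cx⁻¹ * Cθ) *ᵥ ζ))
    (hν : nu = -((Cx⁻¹)ᵀ *ᵥ ((Jxx - Lxx)ᵀ *ᵥ mu + (Jθx - Lθx)ᵀ *ᵥ ζ))) :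
    Eθ ⬝ᵥ Δθ = ζ ⬝ᵥ ΔO + mu ⬝ᵥ ΔA - nu ⬝ᵥ ΔF := by
  have key : Eθ ⬝ᵥ Δθ = ζ ⬝ᵥ (ℓθθ *ᵥ Δθ) := by
    rw [← hζ, dotProduct_comm, dotProduct_mulVec, ← mulVec_transpose, hsymm.eq,
      dotProduct_comm]
  rw [key, hΔθ, hμ, hν, hμ]
  simp only [dotProduct_sub, dotProduct_add, dotProduct_neg, neg_dotProduct,
    dotProduct_mulVec, mulVec_mulVec, vecMul_vecMul, sub_mulVec, add_mulVec,
    sub_dotProduct, add_dotProduct, Matrix.sub_mul, Matrix.mul_sub,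
    vecMul_transpose, mulVec_transpose, Matrix.transpose_mul, Matrix.transpose_sub,
    Matrix.mul_assoc, ← vecMul_transpose, Matrix.neg_vecMul, Matrix.sub_vecMul,
    Matrix.add_vecMul, vecMul_vecMul, aux_reorient, Matrix.transpose_transpose,
    Matrix.vecMul_sub, Matrix.vecMul_add]
  ring
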